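/- Let m be a monomial in the n-mode Weyl algebra with multi-degree (α, β), and set g₊(m) = i(m† + m), g₋(m) = m† − m. Then g₊(m) and g₋(m) commute if and only if α = β. -/

import Mathlib

open scoped BigOperators

namespace WeylPaper

/-- Defining relations of the `n`-th Weyl algebra: generators `Sum.inl k` are the
annihilation operators `aₖ`, generators `Sum.inr k` are the creation operators `aₖ†`,
with `[aᵢ, aⱼ†] = δᵢⱼ` and all other commutators of generators vanishing. -/
inductive WeylRel (n : ℕ) :
    FreeAlgebra ℂ (Fin n ⊕ Fin n) → FreeAlgebra ℂ (Fin n ⊕ Fin n) → Prop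
  | ann_cre (i j : Fin n) :
      WeylRel n (FreeAlgebra.ι ℂ (Sum.inl i) * FreeAlgebra.ι ℂ (Sum.inr j))
        (FreeAlgebra.ι ℂ (Sum.inr j) * FreeAlgebra.ι ℂ (Sum.inl i) +
          if i = j then 1 else 0)
  | ann_ann (i j : Fin n) :
      WeylRel n (FreeAlgebra.ι ℂ (Sum.inl i) * FreeAlgebra.ι ℂ (Sum.inl j))
        (FreeAlgebra.ι ℂ (Sum.inl j) * FreeAlgebra.ι ℂ (Sum.inl i))
  | cre_cre (i j : Fin n) :
      WeylRel n (FreeAlgebra.ι ℂ (Sum.inr i) * FreeAlgebra.ι ℂ (Sum.inr j))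
        (FreeAlgebra.ι ℂ (Sum.inr j) * FreeAlgebra.ι ℂ (Sum.inr i))

/-- The `n`-th Weyl algebra `Aₙ`. -/
abbrev Weyl (n : ℕ) := RingQuot (WeylRel n)

/-- The annihilation operator `aₖ`. -/
noncomputable def ann {n : ℕ} (k : Fin n) : Weyl n :=
  RingQuot.mkAlgHom ℂ (WeylRel n) (FreeAlgebra.ι ℂ (Sum.inl k))

/-- The creation operator `aₖ†`. -/
noncomputable def cre {n : ℕ} (k : Fin n) : Weyl n :=
  RingQuot.mkAlgHom ℂ (WeylRel n) (FreeAlgebra.ι ℂ (Sum.inr k))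

/-- The commutator `[x, y] = xy - yx`. -/
def comm {n : ℕ} (x y : Weyl n) : Weyl n := x * y - y * x

/-- The normal-ordered monomial `a^{(α,β)} = ∏ⱼ (aⱼ†)^{αⱼ} · ∏ⱼ aⱼ^{βⱼ}`. -/
noncomputable def nom {n : ℕ} (α β : Fin n → ℕ) : Weyl n :=
  ((List.finRange n).map fun j => cre j ^ α j).prod *
  ((List.finRange n).map fun j => ann j ^ β j).prod

/-- `degLe x d` : `x` admits an expansion into normal-ordered monomials of degree
`|γ| = |α| + |β| ≤ d` (this is "deg(x) ≤ d"; it holds for `x = 0` and every `d`,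
matching `deg 0 = -∞`). -/
def degLe {n : ℕ} (x : Weyl n) (d : ℤ) : Prop :=
  ∃ c : ((Fin n → ℕ) × (Fin n → ℕ)) →₀ ℂ,
    x = c.sum (fun γ z => z • nom γ.1 γ.2) ∧
    ∀ γ ∈ c.support, ((∑ j, γ.1 j : ℕ) : ℤ) + ((∑ j, γ.2 j : ℕ) : ℤ) ≤ d

/-- `hasDeg x d` : `x` has degree exactly `d`. -/
def hasDeg {n : ℕ} (x : Weyl n) (d : ℤ) : Prop := degLe x d ∧ ¬ degLe x (d - 1)

/-- The generator corresponding to a letter. -/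
noncomputable def gen {n : ℕ} : (Fin n ⊕ Fin n) → Weyl n := Sum.elim ann cre

/-- The monomial (word in the generators `aₖ`, `aₖ†`) given by a list of letters. -/
noncomputable def word {n : ℕ} (w : List (Fin n ⊕ Fin n)) : Weyl n := (w.map gen).prod

/-- `α` : number of occurrences of `aⱼ†` in the word `w`. -/
def mdegC {n : ℕ} (w : List (Fin n ⊕ Fin n)) (j : Fin n) : ℕ := w.count (Sum.inr j)

/-- `β` : number of occurrences of `aⱼ` in the word `w`. -/
def mdegA {n : ℕ} (w : List (Fin n ⊕ Fin n)) (j : Fin n) : ℕ := w.count (Sum.inl j)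

/-- The basis element `g₊^{(α,β)} = i (a^{(β,α)} + a^{(α,β)})`. -/
noncomputable def gplus {n : ℕ} (α β : Fin n → ℕ) : Weyl n :=
  Complex.I • (nom β α + nom α β)

/-- The basis element `g₋^{(α,β)} = a^{(β,α)} - a^{(α,β)}`. -/
noncomputable def gminus {n : ℕ} (α β : Fin n → ℕ) : Weyl n :=
  nom β α - nom α β

/-- Type synonym for the opposite algebra, with ℂ acting through conjugation;
used to construct the adjoint `(·)†`. -/
def Conj (n : ℕ) : Type := (Weyl n)ᵐᵒᵖ

instance (n : ℕ) : Ring (Conj n) := inferInstanceAs (Ring (Weyl n)ᵐᵒᵖ)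

noncomputable instance (n : ℕ) : Algebra ℂ (Conj n) :=
  RingHom.toAlgebra' ((algebraMap ℂ (Weyl n)ᵐᵒᵖ).comp (starRingEnd ℂ))
    (fun c x =>
      Algebra.commutes (A := (Weyl n)ᵐᵒᵖ) (starRingEnd ℂ c) (show (Weyl n)ᵐᵒᵖ from x))

noncomputable def daggerAux (n : ℕ) : FreeAlgebra ℂ (Fin n ⊕ Fin n) →ₐ[ℂ] Conj n :=
  FreeAlgebra.lift ℂ fun s =>
    (MulOpposite.op (Sum.elim (fun k => cre k) (fun k => ann k) s : Weyl n) : Conj n)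

noncomputable def daggerHom (n : ℕ) : Weyl n →+* Conj n :=
  RingQuot.lift ⟨(daggerAux n).toRingHom, by
    have key : ∀ (x y : FreeAlgebra ℂ (Fin n ⊕ Fin n)), WeylRel n x y →
        RingQuot.mkAlgHom ℂ (WeylRel n) x = RingQuot.mkAlgHom ℂ (WeylRel n) y :=
      fun x y h => RingQuot.mkAlgHom_rel ℂ h
    have hι : ∀ s, daggerAux n (FreeAlgebra.ι ℂ s) =
        (MulOpposite.op (Sum.elim (fun k => cre k) (fun k => ann k) s : Weyl n) : Conj n) :=
      fun s => FreeAlgebra.lift_ι_apply _ _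
    intro x y h
    induction h with
    | ann_cre i j =>
        show (daggerAux n) _ = (daggerAux n) _
        by_cases hij : i = j
        · subst hij
          have hcomm : (ann i : Weyl n) * cre i = cre i * ann i + 1 := by
            have hrel := key _ _ (WeylRel.ann_cre i i)
            rw [if_pos rfl] at hrel
            simpa [ann, cre] using hrel
          simp only [eq_self_iff_true, if_true, ite_true, map_mul, map_add, map_one, 
            FreeAlgebra.lift_ι_apply, hι, Sum.elim_inl, Sum.elim_inr]
          calc (MulOpposite.op (cre i) : Conj n) * MulOpposite.op (ann i)
              = MulOpposite.op ((ann i : Weyl n) * cre i) := rfl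
            _ = MulOpposite.op ((cre i : Weyl n) * ann i + 1) := by rw [hcomm]
            _ = MulOpposite.op (ann i) * MulOpposite.op (cre i) + 1 := rfl
        · have hcomm : (ann j : Weyl n) * cre i = cre i * ann j := by
            have hrel := key _ _ (WeylRel.ann_cre j i)
            rw [if_neg (fun h => hij h.symm)] at hrel
            simpa [ann, cre] using hrel
          simp only [if_neg hij, map_mul, map_add, map_zero, add_zero, 
            FreeAlgebra.lift_ι_apply, hι, Sum.elim_inl, Sum.elim_inr]
          calc (MulOpposite.op (cre i) : Conj n) * MulOpposite.op (ann j)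
              = MulOpposite.op ((ann j : Weyl n) * cre i) := rfl
            _ = MulOpposite.op ((cre i : Weyl n) * ann j) := by rw [hcomm]
            _ = MulOpposite.op (ann j) * MulOpposite.op (cre i) := rfl
    | ann_ann i j =>
        show (daggerAux n) _ = (daggerAux n) _
        have hcomm : (cre j : Weyl n) * cre i = cre i * cre j := by
          simpa [cre] using key _ _ (WeylRel.cre_cre j i)
        simp only [map_mul, FreeAlgebra.lift_ι_apply, hι, Sum.elim_inl]
        calc (MulOpposite.op (cre i) : Conj n) * MulOpposite.op (cre j)
            = MulOpposite.op ((cre j : Weyl n) * cre i) := rfl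
          _ = MulOpposite.op ((cre i : Weyl n) * cre j) := by rw [hcomm]
          _ = MulOpposite.op (cre j) * MulOpposite.op (cre i) := rfl
    | cre_cre i j =>
        show (daggerAux n) _ = (daggerAux n) _
        have hcomm : (ann j : Weyl n) * ann i = ann i * ann j := by
          simpa [ann] using key _ _ (WeylRel.ann_ann j i)
        simp only [map_mul, FreeAlgebra.lift_ι_apply, hι, Sum.elim_inr]
        calc (MulOpposite.op (ann i) : Conj n) * MulOpposite.op (ann j)
            = MulOpposite.op ((ann j : Weyl n) * ann i) := rfl
          _ = MulOpposite.op ((ann i : Weyl n) * ann j) := by rw [hcomm]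
          _ = MulOpposite.op (ann j) * MulOpposite.op (ann i) := rfl⟩

/-- The adjoint `(·)†` : the ℂ-antilinear anti-automorphism of the Weyl algebra
determined by `(aⱼ)† = aⱼ†` and `(aⱼ†)† = aⱼ`. -/
noncomputable def dagger {n : ℕ} (x : Weyl n) : Weyl n :=
  MulOpposite.unop (show (Weyl n)ᵐᵒᵖ from daggerHom n x)



section Basic
variable {n : ℕ}

@[simp] lemma word_nil : word ([] : List (Fin n ⊕ Fin n)) = 1 := by simp [word]

@[simp] lemma word_cons (x : Fin n ⊕ Fin n) (t : List (Fin n ⊕ Fin n)) :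
    word (x :: t) = gen x * word t := by simp [word]

lemma word_append (u v : List (Fin n ⊕ Fin n)) : word (u ++ v) = word u * word v := by
  simp [word]

@[simp] lemma gen_inl (i : Fin n) : gen (Sum.inl i) = ann i := rfl
@[simp] lemma gen_inr (i : Fin n) : gen (Sum.inr i) = cre i := rfl

lemma ann_mul_cre (i j : Fin n) :
    ann i * cre j = cre j * ann i + (if i = j then 1 else 0) := by
  have h := RingQuot.mkAlgHom_rel ℂ (WeylRel.ann_cre i j)
  simp only [map_mul, map_add] at h
  rw [ann, cre, h]
  congr 1
  split_ifs <;> simp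

lemma cre_mul_cre (i j : Fin n) : cre i * cre j = cre j * cre i := by
  have h := RingQuot.mkAlgHom_rel ℂ (WeylRel.cre_cre i j)
  simpa only [map_mul, cre] using h

lemma ann_mul_ann (i j : Fin n) : ann i * ann j = ann j * ann i := by
  have h := RingQuot.mkAlgHom_rel ℂ (WeylRel.ann_ann i j)
  simpa only [map_mul, ann] using h

lemma dagger_mul (x y : Weyl n) : dagger (x * y) = dagger y * dagger x := by
  rw [dagger, map_mul]; rfl

lemma dagger_add (x y : Weyl n) : dagger (x + y) = dagger x + dagger y := by
  rw [dagger, map_add]; rfl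

@[simp] lemma dagger_one : dagger (1 : Weyl n) = 1 := by
  rw [dagger, map_one]; rfl

lemma mkAlgHom_eq_mkRingHom (x : FreeAlgebra ℂ (Fin n ⊕ Fin n)) :
    RingQuot.mkAlgHom ℂ (WeylRel n) x = RingQuot.mkRingHom (WeylRel n) x := by
  rw [← RingQuot.mkAlgHom_coe ℂ (WeylRel n)]; rfl

@[simp] lemma dagger_ann (k : Fin n) : dagger (ann k) = cre k := by
  show MulOpposite.unop (daggerHom n (ann k)) = cre k
  rw [ann, daggerHom, mkAlgHom_eq_mkRingHom, RingQuot.lift_mkRingHom_apply]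
  show MulOpposite.unop (daggerAux n (FreeAlgebra.ι ℂ (Sum.inl k))) = cre k
  rw [show daggerAux n (FreeAlgebra.ι ℂ (Sum.inl k)) = (MulOpposite.op (cre k : Weyl n) : Conj n) from
    FreeAlgebra.lift_ι_apply _ _]
  rfl

@[simp] lemma dagger_cre (k : Fin n) : dagger (cre k) = ann k := by
  show MulOpposite.unop (daggerHom n (cre k)) = ann k
  rw [cre, daggerHom, mkAlgHom_eq_mkRingHom, RingQuot.lift_mkRingHom_apply]
  show MulOpposite.unop (daggerAux n (FreeAlgebra.ι ℂ (Sum.inr k))) = ann k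
  rw [show daggerAux n (FreeAlgebra.ι ℂ (Sum.inr k)) = (MulOpposite.op (ann k : Weyl n) : Conj n) from
    FreeAlgebra.lift_ι_apply _ _]
  rfl

lemma dagger_gen (x : Fin n ⊕ Fin n) : dagger (gen x) = gen (Sum.swap x) := by
  cases x <;> simp [gen]

/-- reverse + swap of a word: the word representing the dagger. -/
def revswap {n : ℕ} (w : List (Fin n ⊕ Fin n)) : List (Fin n ⊕ Fin n) :=
  (w.reverse).map Sum.swap

@[simp] lemma revswap_nil : revswap ([] : List (Fin n ⊕ Fin n)) = [] := rfl

lemma revswap_cons (x : Fin n ⊕ Fin n) (t : List (Fin n ⊕ Fin n)) :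
    revswap (x :: t) = revswap t ++ [Sum.swap x] := by
  simp [revswap]

lemma revswap_append (u v : List (Fin n ⊕ Fin n)) :
    revswap (u ++ v) = revswap v ++ revswap u := by
  simp [revswap]

lemma dagger_word (w : List (Fin n ⊕ Fin n)) : dagger (word w) = word (revswap w) := by
  induction w with
  | nil => simp
  | cons x t ih =>
      rw [word_cons, dagger_mul, ih, revswap_cons, word_append, dagger_gen]
      simp [word]

end Basic

section Forward
variable {n : ℕ}


lemma sum_beq_iff (x a : Fin n ⊕ Fin n) : (x == a) = true ↔ x = a := by
  cases x <;> cases a <;>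
    simp only [show ∀ (i j : Fin n), ((Sum.inl i : Fin n ⊕ Fin n) == Sum.inl j) = (i == j) from fun _ _ => rfl,
      show ∀ (i j : Fin n), ((Sum.inr i : Fin n ⊕ Fin n) == Sum.inr j) = (i == j) from fun _ _ => rfl,
      show ∀ (i j : Fin n), ((Sum.inl i : Fin n ⊕ Fin n) == Sum.inr j) = false from fun _ _ => rfl,
      show ∀ (i j : Fin n), ((Sum.inr i : Fin n ⊕ Fin n) == Sum.inl j) = false from fun _ _ => rfl] <;>
    simp

lemma count_bridge (a : Fin n ⊕ Fin n) (l : List (Fin n ⊕ Fin n)) :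
    @List.count _ Sum.instBEq a l = @List.count _ instBEqOfDecidableEq a l := by
  induction l with
  | nil => rfl
  | cons x t ih =>
      rw [@List.count_cons _ Sum.instBEq, @List.count_cons _ instBEqOfDecidableEq, ih]
      congr 1
      all_goals
        have hdec : (@BEq.beq _ instBEqOfDecidableEq x a) = decide (x = a) := rfl
      by_cases hxa : x = a
      · rw [hdec, if_pos ((sum_beq_iff x a).mpr hxa), if_pos (decide_eq_true_eq.mpr hxa)]
      · rw [hdec, if_neg (fun hh => hxa ((sum_beq_iff x a).mp hh)),
          if_neg (fun hh => hxa (decide_eq_true_eq.mp hh))]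

lemma count_eq_zero_of_not_mem' (a : Fin n ⊕ Fin n) (l : List (Fin n ⊕ Fin n))
    (h : a ∉ l) : List.count a l = 0 := by
  rw [count_bridge]
  exact (@List.count_eq_zero _ instBEqOfDecidableEq instLawfulBEq _ _).mpr h

lemma commute_gen_inr (i j : Fin n) : Commute (gen (Sum.inr i : Fin n ⊕ Fin n)) (gen (Sum.inr j)) := by
  simpa [Commute, SemiconjBy] using cre_mul_cre i j

lemma commute_gen_inl (i j : Fin n) : Commute (gen (Sum.inl i : Fin n ⊕ Fin n)) (gen (Sum.inl j)) := by
  simpa [Commute, SemiconjBy] using ann_mul_ann i j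

/-- products of all-creation words depend only on counts -/
lemma word_eq_of_counts_inr (l₁ l₂ : List (Fin n ⊕ Fin n))
    (h₁ : ∀ x ∈ l₁, ∃ k, x = Sum.inr k) (h₂ : ∀ x ∈ l₂, ∃ k, x = Sum.inr k)
    (hc : ∀ k : Fin n, l₁.count (Sum.inr k) = l₂.count (Sum.inr k)) :
    word l₁ = word l₂ := by
  have hperm : l₁.Perm l₂ := by
    rw [@List.perm_iff_count _ instBEqOfDecidableEq]
    intro a
    rw [← count_bridge, ← count_bridge]
    cases a with
    | inl i =>
        have c1 : List.count (Sum.inl i) l₁ = 0 := by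
          refine count_eq_zero_of_not_mem' _ _ ?_
          intro hmem
          obtain ⟨k, hk⟩ := h₁ _ hmem
          exact Sum.inl_ne_inr hk
        have c2 : List.count (Sum.inl i) l₂ = 0 := by
          refine count_eq_zero_of_not_mem' _ _ ?_
          intro hmem
          obtain ⟨k, hk⟩ := h₂ _ hmem
          exact Sum.inl_ne_inr hk
        rw [c1, c2]
    | inr k => exact hc k
  have hpair : (l₁.map gen).Pairwise Commute := by
    rw [List.pairwise_map]
    refine List.pairwise_of_forall_mem_list ?_
    intro a ha b hb
    obtain ⟨i, rfl⟩ := h₁ a ha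
    obtain ⟨j, rfl⟩ := h₁ b hb
    exact commute_gen_inr i j
  exact List.Perm.prod_eq' (hperm.map gen) hpair

lemma word_eq_of_counts_inl (l₁ l₂ : List (Fin n ⊕ Fin n))
    (h₁ : ∀ x ∈ l₁, ∃ k, x = Sum.inl k) (h₂ : ∀ x ∈ l₂, ∃ k, x = Sum.inl k)
    (hc : ∀ k : Fin n, l₁.count (Sum.inl k) = l₂.count (Sum.inl k)) :
    word l₁ = word l₂ := by
  have hperm : l₁.Perm l₂ := by
    rw [@List.perm_iff_count _ instBEqOfDecidableEq]
    intro a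
    rw [← count_bridge, ← count_bridge]
    cases a with
    | inr i =>
        have c1 : List.count (Sum.inr i) l₁ = 0 := by
          refine count_eq_zero_of_not_mem' _ _ ?_
          intro hmem
          obtain ⟨k, hk⟩ := h₁ _ hmem
          exact Sum.inr_ne_inl hk
        have c2 : List.count (Sum.inr i) l₂ = 0 := by
          refine count_eq_zero_of_not_mem' _ _ ?_
          intro hmem
          obtain ⟨k, hk⟩ := h₂ _ hmem
          exact Sum.inr_ne_inl hk
        rw [c1, c2]
    | inl k => exact hc k
  have hpair : (l₁.map gen).Pairwise Commute := by
    rw [List.pairwise_map]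
    refine List.pairwise_of_forall_mem_list ?_
    intro a ha b hb
    obtain ⟨i, rfl⟩ := h₁ a ha
    obtain ⟨j, rfl⟩ := h₁ b hb
    exact commute_gen_inl i j
  exact List.Perm.prod_eq' (hperm.map gen) hpair

/-- number of inversions: pairs (annihilator before creator). -/
def inv' : List (Fin n ⊕ Fin n) → ℕ
  | [] => 0
  | (Sum.inl _) :: t => t.countP (fun x => x.isRight) + inv' t
  | (Sum.inr _) :: t => inv' t

lemma countP_isRight_swap_pair (u v : List (Fin n ⊕ Fin n)) (i j : Fin n) :
    (u ++ Sum.inr j :: Sum.inl i :: v).countP (fun x => x.isRight)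
      = (u ++ Sum.inl i :: Sum.inr j :: v).countP (fun x => x.isRight) := by
  simp [List.countP_append, List.countP_cons]

lemma inv'_swap_pair (u v : List (Fin n ⊕ Fin n)) (i j : Fin n) :
    inv' (u ++ Sum.inl i :: Sum.inr j :: v) = inv' (u ++ Sum.inr j :: Sum.inl i :: v) + 1 := by
  induction u with
  | nil =>
      show (Sum.inr j :: v).countP _ + inv' (Sum.inr j :: v) = inv' (Sum.inl i :: v) + 1
      show (Sum.inr j :: v).countP _ + inv' v = (v.countP _ + inv' v) + 1
      rw [List.countP_cons]
      simp [Sum.isRight]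
      omega
  | cons x t ih =>
      cases x with
      | inl a =>
          show (t ++ Sum.inl i :: Sum.inr j :: v).countP _ + inv' (t ++ Sum.inl i :: Sum.inr j :: v)
            = ((t ++ Sum.inr j :: Sum.inl i :: v).countP _ + inv' (t ++ Sum.inr j :: Sum.inl i :: v)) + 1
          rw [ih, countP_isRight_swap_pair]
          omega
      | inr a =>
          show inv' (t ++ Sum.inl i :: Sum.inr j :: v) = inv' (t ++ Sum.inr j :: Sum.inl i :: v) + 1
          exact ih

lemma inv'_drop_pair (u v : List (Fin n ⊕ Fin n)) (i j : Fin n) :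
    inv' (u ++ v) ≤ inv' (u ++ Sum.inl i :: Sum.inr j :: v) := by
  induction u with
  | nil =>
      show inv' v ≤ (Sum.inr j :: v).countP _ + inv' (Sum.inr j :: v)
      show inv' v ≤ (Sum.inr j :: v).countP _ + inv' v
      omega
  | cons x t ih =>
      cases x with
      | inl a =>
          show (t ++ v).countP _ + inv' (t ++ v) ≤ (t ++ Sum.inl i :: Sum.inr j :: v).countP _ + inv' (t ++ Sum.inl i :: Sum.inr j :: v)
          have hc : (t ++ v).countP (fun x : Fin n ⊕ Fin n => x.isRight)
              ≤ (t ++ Sum.inl i :: Sum.inr j :: v).countP (fun x => x.isRight) := by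
            simp [List.countP_append, List.countP_cons]
          omega
      | inr a => exact ih

/-- every word either contains an adjacent (annihilator, creator) pair, or is normally ordered -/
lemma word_decomp (w : List (Fin n ⊕ Fin n)) :
    (∃ u i j v, w = u ++ Sum.inl i :: Sum.inr j :: v) ∨
    (∃ c a, w = c ++ a ∧ (∀ x ∈ c, ∃ k, x = Sum.inr k) ∧ (∀ x ∈ a, ∃ k, x = Sum.inl k)) := by
  induction w with
  | nil => exact Or.inr ⟨[], [], by simp, by simp, by simp⟩
  | cons x t ih =>
      rcases ih with ⟨u, i, j, v, rfl⟩ | ⟨c, a, rfl, hc, ha⟩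
      · exact Or.inl ⟨x :: u, i, j, v, by simp⟩
      · cases x with
        | inr k =>
            refine Or.inr ⟨Sum.inr k :: c, a, by simp, ?_, ha⟩
            intro y hy
            rcases hy with _ | hy
            · exact ⟨k, rfl⟩
            · exact hc _ (by assumption)
        | inl i =>
            cases c with
            | nil =>
                refine Or.inr ⟨[], Sum.inl i :: a, by simp, by simp, ?_⟩
                intro y hy
                rcases hy with _ | hy
                · exact ⟨i, rfl⟩
                · exact ha _ (by assumption)
            | cons y c' =>
                obtain ⟨j, rfl⟩ := hc y (by simp)
                exact Or.inl ⟨[], i, j, c' ++ a, by simp⟩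

end Forward

section ForwardMain
variable {n : ℕ}

@[simp] lemma beq_inl_inl (i j : Fin n) : ((Sum.inl i : Fin n ⊕ Fin n) == Sum.inl j) = (i == j) := rfl
@[simp] lemma beq_inr_inr (i j : Fin n) : ((Sum.inr i : Fin n ⊕ Fin n) == Sum.inr j) = (i == j) := rfl
@[simp] lemma beq_inl_inr (i j : Fin n) : ((Sum.inl i : Fin n ⊕ Fin n) == Sum.inr j) = false := rfl
@[simp] lemma beq_inr_inl (i j : Fin n) : ((Sum.inr i : Fin n ⊕ Fin n) == Sum.inl j) = false := rfl

lemma word_pair_rewrite (u v : List (Fin n ⊕ Fin n)) (i j : Fin n) :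
    word (u ++ Sum.inl i :: Sum.inr j :: v)
      = word (u ++ Sum.inr j :: Sum.inl i :: v) + (if i = j then word (u ++ v) else 0) := by
  rw [word_append, word_append, word_append]
  simp only [word_cons, gen_inl, gen_inr]
  rw [← mul_assoc (ann i), ann_mul_cre i j]
  by_cases hij : i = j
  · rw [if_pos hij, if_pos hij]
    rw [add_mul, one_mul, mul_add, mul_assoc]
  · rw [if_neg hij, if_neg hij]
    rw [add_zero, add_zero, mul_assoc]

lemma revswap_pair (u v : List (Fin n ⊕ Fin n)) (i j : Fin n) :
    revswap (u ++ Sum.inl i :: Sum.inr j :: v)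
      = revswap v ++ Sum.inl j :: Sum.inr i :: revswap u := by
  simp [revswap]

lemma revswap_pair' (u v : List (Fin n ⊕ Fin n)) (i j : Fin n) :
    revswap (u ++ Sum.inr j :: Sum.inl i :: v)
      = revswap v ++ Sum.inr i :: Sum.inl j :: revswap u := by
  simp [revswap]

lemma count_revswap_inr (k : Fin n) (l : List (Fin n ⊕ Fin n)) :
    (revswap l).count (Sum.inr k) = l.count (Sum.inl k) := by
  have hinj : Function.Injective (Sum.swap : Fin n ⊕ Fin n → Fin n ⊕ Fin n) := by
    intro a b h
    rw [← Sum.swap_swap a, ← Sum.swap_swap b, h]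
  rw [count_bridge, count_bridge, revswap]
  rw [show (Sum.inr k : Fin n ⊕ Fin n) = Sum.swap (Sum.inl k) from rfl,
    @List.count_map_of_injective _ _ instBEqOfDecidableEq _ instBEqOfDecidableEq _ _ _ hinj, @List.count_reverse _ instBEqOfDecidableEq]

lemma count_revswap_inl (k : Fin n) (l : List (Fin n ⊕ Fin n)) :
    (revswap l).count (Sum.inl k) = l.count (Sum.inr k) := by
  have hinj : Function.Injective (Sum.swap : Fin n ⊕ Fin n → Fin n ⊕ Fin n) := by
    intro a b h
    rw [← Sum.swap_swap a, ← Sum.swap_swap b, h]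
  rw [count_bridge, count_bridge, revswap]
  rw [show (Sum.inl k : Fin n ⊕ Fin n) = Sum.swap (Sum.inr k) from rfl,
    @List.count_map_of_injective _ _ instBEqOfDecidableEq _ instBEqOfDecidableEq _ _ _ hinj, @List.count_reverse _ instBEqOfDecidableEq]

lemma mem_revswap_inr (l : List (Fin n ⊕ Fin n)) (h : ∀ x ∈ l, ∃ k, x = Sum.inl k) :
    ∀ x ∈ revswap l, ∃ k, x = Sum.inr k := by
  intro x hx
  rw [revswap, List.mem_map] at hx
  obtain ⟨y, hy, rfl⟩ := hx
  obtain ⟨k, rfl⟩ := h y (List.mem_reverse.mp hy)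
  exact ⟨k, rfl⟩

lemma mem_revswap_inl (l : List (Fin n ⊕ Fin n)) (h : ∀ x ∈ l, ∃ k, x = Sum.inr k) :
    ∀ x ∈ revswap l, ∃ k, x = Sum.inl k := by
  intro x hx
  rw [revswap, List.mem_map] at hx
  obtain ⟨y, hy, rfl⟩ := hx
  obtain ⟨k, rfl⟩ := h y (List.mem_reverse.mp hy)
  exact ⟨k, rfl⟩

lemma word_revswap_aux : ∀ (N : ℕ) (w : List (Fin n ⊕ Fin n)), 2 * inv' w + w.length ≤ N →
    (∀ k, w.count (Sum.inr k) = w.count (Sum.inl k)) → word (revswap w) = word w := by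
  intro N
  induction N with
  | zero =>
      intro w hm _
      have : w = [] := List.length_eq_zero_iff.mp (by omega)
      subst this
      simp
  | succ N ih =>
      intro w hm hcnt
      rcases word_decomp w with ⟨u, i, j, v, rfl⟩ | ⟨c, a, rfl, hc, ha⟩
      · -- adjacent pair case
        have hswap := inv'_swap_pair u v i j
        have hdrop := inv'_drop_pair u v i j
        have hlen : (u ++ Sum.inl i :: Sum.inr j :: v).length = u.length + v.length + 2 := by
          simp; omega
        have hlen' : (u ++ Sum.inr j :: Sum.inl i :: v).length = u.length + v.length + 2 := by
          simp; omega
        have hcnt' : ∀ k, (u ++ Sum.inr j :: Sum.inl i :: v).count (Sum.inr k)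
            = (u ++ Sum.inr j :: Sum.inl i :: v).count (Sum.inl k) := by
          intro k
          have := hcnt k
          simp only [List.count_append, List.count_cons, beq_inl_inl, beq_inr_inr,
            beq_inl_inr, beq_inr_inl, if_false] at this ⊢
          split_ifs at this ⊢ <;> omega
        have ih1 : word (revswap (u ++ Sum.inr j :: Sum.inl i :: v))
            = word (u ++ Sum.inr j :: Sum.inl i :: v) := by
          refine ih _ ?_ hcnt'
          rw [List.length_append] at *
          omega
        by_cases hij : i = j
        · subst hij
          have hcnt'' : ∀ k, (u ++ v).count (Sum.inr k) = (u ++ v).count (Sum.inl k) := by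
            intro k
            have := hcnt k
            simp only [List.count_append, List.count_cons, beq_inl_inl, beq_inr_inr,
              beq_inl_inr, beq_inr_inl, if_false, beq_iff_eq] at this ⊢
            split_ifs at this ⊢ <;> omega
          have ih2 : word (revswap (u ++ v)) = word (u ++ v) := by
            refine ih _ ?_ hcnt''
            have : (u ++ v).length + 2 = (u ++ Sum.inl i :: Sum.inr i :: v).length := by
              simp; omega
            omega
          rw [revswap_pair, word_pair_rewrite, if_pos rfl, ← revswap_pair',
            ← revswap_append, ih1, ih2, word_pair_rewrite u v i i, if_pos rfl]
        · rw [revswap_pair, word_pair_rewrite, if_neg (fun h => hij h.symm), add_zero,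
            ← revswap_pair', ih1, word_pair_rewrite u v i j, if_neg hij, add_zero]
      · -- sorted case
        have h1 : word (revswap a) = word c := by
          refine word_eq_of_counts_inr _ _ (mem_revswap_inr a ha) hc ?_
          intro k
          rw [count_revswap_inr]
          have := hcnt k
          have hca : a.count (Sum.inr k) = 0 := count_eq_zero_of_not_mem' _ _ (by
            intro hmem
            obtain ⟨k', hk'⟩ := ha _ hmem
            exact Sum.inr_ne_inl hk')
          have hcc : c.count (Sum.inl k) = 0 := count_eq_zero_of_not_mem' _ _ (by
            intro hmem
            obtain ⟨k', hk'⟩ := hc _ hmem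
            exact Sum.inl_ne_inr hk')
          simp only [List.count_append] at this
          omega
        have h2 : word (revswap c) = word a := by
          refine word_eq_of_counts_inl _ _ (mem_revswap_inl c hc) ha ?_
          intro k
          rw [count_revswap_inl]
          have := hcnt k
          have hca : a.count (Sum.inr k) = 0 := count_eq_zero_of_not_mem' _ _ (by
            intro hmem
            obtain ⟨k', hk'⟩ := ha _ hmem
            exact Sum.inr_ne_inl hk')
          have hcc : c.count (Sum.inl k) = 0 := count_eq_zero_of_not_mem' _ _ (by
            intro hmem
            obtain ⟨k', hk'⟩ := hc _ hmem
            exact Sum.inl_ne_inr hk')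
          simp only [List.count_append] at this
          omega
        rw [revswap_append, word_append, word_append, h1, h2]

lemma word_revswap (w : List (Fin n ⊕ Fin n)) (h : mdegC w = mdegA w) :
    word (revswap w) = word w := by
  refine word_revswap_aux (2 * inv' w + w.length) w le_rfl ?_
  intro k
  exact congrFun h k

end ForwardMain

section Rep
variable {n : ℕ}

/-- the module `ℂ^{(ℤⁿ)}` on which the Weyl algebra acts -/
abbrev V (n : ℕ) := (Fin n → ℤ) →₀ ℂ

/-- unit vector in `ℤⁿ` -/
def ez (j : Fin n) : Fin n → ℤ := fun k => if j = k then 1 else 0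

/-- lowering operator -/
noncomputable def lowOp (j : Fin n) : V n →ₗ[ℂ] V n :=
  Finsupp.lsum ℂ (fun μ => ((μ j : ℤ) : ℂ) • Finsupp.lsingle (μ - ez j))

/-- raising operator -/
noncomputable def raiseOp (j : Fin n) : V n →ₗ[ℂ] V n :=
  Finsupp.lsum ℂ (fun μ => (Finsupp.lsingle (μ + ez j) : ℂ →ₗ[ℂ] V n))

lemma lowOp_single (j : Fin n) (μ : Fin n → ℤ) (c : ℂ) :
    lowOp j (Finsupp.single μ c) = ((μ j : ℤ) : ℂ) • Finsupp.single (μ - ez j) c := by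
  rw [lowOp, Finsupp.lsum_single]; rfl

lemma raiseOp_single (j : Fin n) (μ : Fin n → ℤ) (c : ℂ) :
    raiseOp j (Finsupp.single μ c) = Finsupp.single (μ + ez j) c := by
  rw [raiseOp, Finsupp.lsum_single]; rfl

noncomputable def rep (n : ℕ) : Weyl n →ₐ[ℂ] Module.End ℂ (V n) :=
  RingQuot.liftAlgHom ℂ ⟨FreeAlgebra.lift ℂ (Sum.elim lowOp raiseOp), by
    intro x y h
    induction h with
    | ann_cre i j =>
        simp only [map_mul, map_add, FreeAlgebra.lift_ι_apply, Sum.elim_inl, Sum.elim_inr]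
        have hite : (FreeAlgebra.lift ℂ (Sum.elim lowOp raiseOp))
            (if i = j then 1 else 0 : FreeAlgebra ℂ (Fin n ⊕ Fin n))
            = (if i = j then 1 else 0 : Module.End ℂ (V n)) := by
          split_ifs <;> simp
        rw [hite]
        refine Finsupp.lhom_ext fun μ c => ?_
        simp only [Module.End.mul_apply, LinearMap.add_apply, raiseOp_single, lowOp_single,
          map_smul]
        by_cases hij : i = j
        · subst hij
          rw [if_pos rfl]
          have h1 : (μ + ez i) i = μ i + 1 := by simp [ez]
          have h2 : μ + ez i - ez i = μ := by abel
          have h3 : μ - ez i + ez i = μ := by abel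
          rw [h1, h2, h3]
          push_cast
          rw [add_smul]
          simp [Module.End.one_apply]
        · rw [if_neg hij]
          have h1 : (μ + ez j) i = μ i := by
            show μ i + ez j i = μ i
            rw [ez, if_neg (fun h => hij h.symm)]; ring
          have h2 : μ + ez j - ez i = μ - ez i + ez j := by abel
          rw [h1, h2]
          simp
    | ann_ann i j =>
        simp only [map_mul, FreeAlgebra.lift_ι_apply, Sum.elim_inl]
        refine Finsupp.lhom_ext fun μ c => ?_
        simp only [Module.End.mul_apply, lowOp_single, map_smul]
        rw [smul_smul, smul_smul]
        have h2 : μ - ez j - ez i = μ - ez i - ez j := by abel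
        rw [h2]
        congr 1
        by_cases hij : i = j
        · subst hij; ring
        · have ha : (μ - ez j) i = μ i := by
            show μ i - ez j i = μ i
            rw [ez, if_neg (fun h => hij h.symm)]; ring
          have hb : (μ - ez i) j = μ j := by
            show μ j - ez i j = μ j
            rw [ez, if_neg hij]; ring
          rw [ha, hb]; ring
    | cre_cre i j =>
        simp only [map_mul, FreeAlgebra.lift_ι_apply, Sum.elim_inr]
        refine Finsupp.lhom_ext fun μ c => ?_
        simp only [Module.End.mul_apply, raiseOp_single]
        congr 1
        abel⟩

lemma rep_ann (k : Fin n) : rep n (ann k) = lowOp k := by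
  rw [rep, ann, RingQuot.liftAlgHom_mkAlgHom_apply, FreeAlgebra.lift_ι_apply]; rfl

lemma rep_cre (k : Fin n) : rep n (cre k) = raiseOp k := by
  rw [rep, cre, RingQuot.liftAlgHom_mkAlgHom_apply, FreeAlgebra.lift_ι_apply]; rfl

end Rep

section Eval
variable {n : ℕ}

/-- net degree shift of a word, as an integer vector -/
def shift (w : List (Fin n ⊕ Fin n)) : Fin n → ℤ :=
  fun j => (w.count (Sum.inr j) : ℤ) - (w.count (Sum.inl j) : ℤ)

@[simp] lemma shift_nil : shift ([] : List (Fin n ⊕ Fin n)) = 0 := by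
  funext j; simp [shift]

lemma fin_beq_iff (i k : Fin n) : (i == k) = true ↔ i = k := by
  exact beq_iff_eq

lemma ite_beq_eq (i k : Fin n) (a b : ℤ) :
    (if (i == k) = true then a else b) = if i = k then a else b := by
  by_cases h : i = k
  · rw [if_pos ((fin_beq_iff i k).mpr h), if_pos h]
  · rw [if_neg (fun hh => h ((fin_beq_iff i k).mp hh)), if_neg h]

lemma shift_cons_inl (i : Fin n) (t : List (Fin n ⊕ Fin n)) :
    shift (Sum.inl i :: t) = shift t - ez i := by
  funext k
  simp only [shift, List.count_cons, beq_inl_inl, beq_inr_inl, beq_inl_inr, beq_inr_inr,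
    if_false, Pi.sub_apply, ez]
  push_cast
  simp only [beq_iff_eq]
  split_ifs <;> omega

lemma shift_cons_inr (i : Fin n) (t : List (Fin n ⊕ Fin n)) :
    shift (Sum.inr i :: t) = shift t + ez i := by
  funext k
  simp only [shift, List.count_cons, beq_inl_inl, beq_inr_inl, beq_inl_inr, beq_inr_inr,
    if_false, Pi.add_apply, ez]
  push_cast
  simp only [beq_iff_eq]
  split_ifs <;> omega

lemma shift_revswap (w : List (Fin n ⊕ Fin n)) : shift (revswap w) = - shift w := by
  funext j
  simp only [shift, count_revswap_inl, count_revswap_inr, Pi.neg_apply]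
  ring

/-- the scalar produced by acting with `word w` on the basis vector `eₘ` -/
def coeff : List (Fin n ⊕ Fin n) → (Fin n → ℤ) → ℂ
  | [], _ => 1
  | (Sum.inl i) :: t, μ => ((μ i + shift t i : ℤ) : ℂ) * coeff t μ
  | (Sum.inr _) :: t, μ => coeff t μ

lemma rep_word_single (w : List (Fin n ⊕ Fin n)) (μ : Fin n → ℤ) :
    rep n (word w) (Finsupp.single μ 1) = coeff w μ • Finsupp.single (μ + shift w) 1 := by
  induction w with
  | nil => simp [coeff, Module.End.one_apply]
  | cons x t ih =>
      rw [word_cons, map_mul, Module.End.mul_apply, ih, map_smul]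
      cases x with
      | inl i =>
          rw [gen_inl, rep_ann, lowOp_single, coeff, shift_cons_inl, smul_smul, mul_comm]
          congr 2
          abel
      | inr i =>
          rw [gen_inr, rep_cre, raiseOp_single, coeff, shift_cons_inr]
          congr 2
          abel

/-- roots (in the variable `μ j`) of the coefficient of a word -/
def rts : List (Fin n ⊕ Fin n) → Fin n → List ℤ
  | [], _ => []
  | (Sum.inl i) :: t, j => if i = j then (-(shift t i)) :: rts t j else rts t j
  | (Sum.inr _) :: t, j => rts t j

lemma coeff_zero_iff (w : List (Fin n ⊕ Fin n)) (μ : Fin n → ℤ) :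
    coeff w μ = 0 ↔ ∃ j, ∃ r ∈ rts w j, μ j = r := by
  induction w with
  | nil =>
      simp [coeff, rts]
  | cons x t ih =>
      cases x with
      | inl i =>
          rw [coeff, mul_eq_zero, ih]
          constructor
          · rintro (hf | ⟨j, r, hr, hμ⟩)
            · refine ⟨i, -(shift t i), ?_, ?_⟩
              · rw [rts, if_pos rfl]; exact List.mem_cons_self
              · have : (μ i + shift t i : ℤ) = 0 := by exact_mod_cast hf
                omega
            · refine ⟨j, r, ?_, hμ⟩
              rw [rts]
              split_ifs
              · exact List.mem_cons_of_mem _ hr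
              · exact hr
          · rintro ⟨j, r, hr, hμ⟩
            rw [rts] at hr
            by_cases hij : i = j
            · rw [if_pos hij] at hr
              rcases List.mem_cons.mp hr with h | h
              · left
                subst hij
                rw [hμ, h]
                push_cast
                ring
              · right; exact ⟨j, r, h, hμ⟩
            · rw [if_neg hij] at hr
              right; exact ⟨j, r, hr, hμ⟩
      | inr i =>
          rw [coeff, ih]
          constructor
          · rintro ⟨j, r, hr, hμ⟩
            exact ⟨j, r, by rw [rts]; exact hr, hμ⟩
          · rintro ⟨j, r, hr, hμ⟩
            exact ⟨j, r, by rw [rts] at hr; exact hr, hμ⟩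

lemma length_rts (w : List (Fin n ⊕ Fin n)) (j : Fin n) :
    (rts w j).length = w.count (Sum.inl j) := by
  induction w with
  | nil => simp [rts]
  | cons x t ih =>
      cases x with
      | inl i =>
          rw [rts, List.count_cons, beq_inl_inl]
          by_cases hij : i = j
          · rw [if_pos hij, if_pos ((fin_beq_iff i j).mpr hij), List.length_cons, ih]
          · rw [if_neg hij, if_neg (fun hh => hij ((fin_beq_iff i j).mp hh)), ih, add_zero]
      | inr i =>
          rw [rts, List.count_cons, beq_inr_inl, ih]
          simp

lemma abs_shift_le (w : List (Fin n ⊕ Fin n)) (j : Fin n) : |shift w j| ≤ (w.length : ℤ) := by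
  have h1 := List.count_le_length (a := Sum.inr j) (l := w)
  have h2 := List.count_le_length (a := Sum.inl j) (l := w)
  rw [shift, abs_le]
  omega

lemma mem_rts_bound (w : List (Fin n ⊕ Fin n)) (j : Fin n) (r : ℤ) (hr : r ∈ rts w j) :
    |r| ≤ (w.length : ℤ) := by
  induction w with
  | nil => simp [rts] at hr
  | cons x t ih =>
      cases x with
      | inl i =>
          rw [rts] at hr
          rw [List.length_cons]
          by_cases hij : i = j
          · rw [if_pos hij] at hr
            rcases List.mem_cons.mp hr with h | h
            · subst h
              have := abs_shift_le t i
              rw [abs_neg]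
              push_cast
              omega
            · have := ih h; push_cast; omega
          · rw [if_neg hij] at hr
            have := ih hr; push_cast; omega
      | inr i =>
          rw [rts] at hr
          have := ih hr
          rw [List.length_cons]
          push_cast
          omega

lemma length_revswap (w : List (Fin n ⊕ Fin n)) : (revswap w).length = w.length := by
  simp [revswap]

end Eval

section Endgame

lemma endgame (S T : List ℤ) (e : ℤ) (he : 0 < e) (hT : T ≠ [])
    (h : ∀ t : ℤ, ((∃ r ∈ S, t = r) ∨ (∃ r ∈ T, t + e = r)) ↔
      ((∃ r ∈ T, t = r) ∨ (∃ r ∈ S, t - e = r))) : False := by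
  classical
  obtain ⟨x, hx⟩ := List.exists_mem_of_ne_nil T hT
  set L : List ℤ := T ++ S.map (· + e) with hL
  have hxL : x ∈ L := List.mem_append_left _ hx
  have hne : L.toFinset.Nonempty := ⟨x, List.mem_toFinset.mpr hxL⟩
  set M := L.toFinset.max' hne with hM
  have hMmem : M ∈ L := List.mem_toFinset.mp (L.toFinset.max'_mem hne)
  have hle : ∀ y ∈ L, y ≤ M := fun y hy => L.toFinset.le_max' y (List.mem_toFinset.mpr hy)
  have hRHS : (∃ r ∈ T, M = r) ∨ (∃ r ∈ S, M - e = r) := by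
    rcases List.mem_append.mp hMmem with hmem | hmem
    · exact Or.inl ⟨M, hmem, rfl⟩
    · obtain ⟨r, hr, hre⟩ := List.mem_map.mp hmem
      exact Or.inr ⟨r, hr, by omega⟩
  rcases (h M).mpr hRHS with ⟨r, hrS, hMr⟩ | ⟨r, hrT, hMr⟩
  · have : r + e ∈ L := List.mem_append_right _ (List.mem_map.mpr ⟨r, hrS, rfl⟩)
    have := hle _ this
    omega
  · have := hle _ (List.mem_append_left _ hrT)
    omega

end Endgame

section Assembly
variable {n : ℕ}

lemma coeff_zero_at (u : List (Fin n ⊕ Fin n)) (j : Fin n) (t : ℤ) (ν : Fin n → ℤ)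
    (hν : ν j = t) (hbig : ∀ k, k ≠ j → (u.length : ℤ) < |ν k|) :
    (coeff u ν = 0 ↔ ∃ r ∈ rts u j, t = r) := by
  rw [coeff_zero_iff]
  constructor
  · rintro ⟨k, r, hr, hμ⟩
    by_cases hkj : k = j
    · subst hkj
      exact ⟨r, hr, by rw [← hν, hμ]⟩
    · exfalso
      have hb := mem_rts_bound u k r hr
      have hbig' := hbig k hkj
      rw [hμ] at hbig'
      linarith
  · rintro ⟨r, hr, ht⟩
    exact ⟨j, r, hr, by rw [hν]; exact ht⟩

end Assembly

theorem statement12' {n : ℕ} (w : List (Fin n ⊕ Fin n)) :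
    comm (Complex.I • (dagger (word w) + word w)) (dagger (word w) - word w) = 0 ↔
      mdegC w = mdegA w := by
  constructor
  · intro h
    rw [dagger_word] at h
    have hID : comm (Complex.I • (word (revswap w) + word w)) (word (revswap w) - word w)
        = Complex.I • ((word (revswap w) + word w) * (word (revswap w) - word w)
          - (word (revswap w) - word w) * (word (revswap w) + word w)) := by
      rw [comm, smul_mul_assoc, mul_smul_comm, smul_sub]
    rw [hID] at h
    have hD : (word (revswap w) + word w) * (word (revswap w) - word w)
        - (word (revswap w) - word w) * (word (revswap w) + word w) = 0 := by
      have h2 := congrArg (fun z => (Complex.I)⁻¹ • z) h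
      simpa [smul_smul, inv_mul_cancel₀ Complex.I_ne_zero] using h2
    have key : (word (revswap w) + word w) * (word (revswap w) - word w)
        - (word (revswap w) - word w) * (word (revswap w) + word w)
        = (word w * word (revswap w) - word (revswap w) * word w)
          + (word w * word (revswap w) - word (revswap w) * word w) := by
      simp only [mul_sub, sub_mul, add_mul, mul_add]
      abel
    have hsum : (word w * word (revswap w) - word (revswap w) * word w)
        + (word w * word (revswap w) - word (revswap w) * word w) = 0 := by
      rw [← key]; exact hD
    have hx : word w * word (revswap w) - word (revswap w) * word w = 0 := by
      have h2 := congrArg (fun z => (2:ℂ)⁻¹ • z)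
        (show (2:ℂ) • (word w * word (revswap w) - word (revswap w) * word w) = 0 by
          rw [two_smul]; exact hsum)
      simpa [smul_smul, inv_mul_cancel₀ (two_ne_zero (α := ℂ))] using h2
    have hcomm : word w * word (revswap w) = word (revswap w) * word w := sub_eq_zero.mp hx
    have heq : ∀ μ : Fin n → ℤ, coeff (revswap w) μ * coeff w (μ - shift w)
        = coeff w μ * coeff (revswap w) (μ + shift w) := by
      intro μ
      have hap := DFunLike.congr_fun (congrArg (fun z => rep n z) hcomm)
        (Finsupp.single μ (1:ℂ))
      simp only [map_mul, Module.End.mul_apply] at hap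
      simp only [rep_word_single, map_smul, shift_revswap, smul_smul] at hap
      have e2 : μ + -shift w + shift w = μ := by abel
      have e3 : μ + shift w + -shift w = μ := by abel
      have e1 : μ + -shift w = μ - shift w := (sub_eq_add_neg μ (shift w)).symm
      rw [e2, e3, e1] at hap
      have hval := DFunLike.congr_fun hap μ
      simpa using hval
    have hshift : ∀ j, shift w j = 0 := by
      intro j
      by_contra hj
      have hiff : ∀ t : ℤ, ((∃ r ∈ rts w j, t = r) ∨ (∃ r ∈ rts (revswap w) j, t + shift w j = r))
          ↔ ((∃ r ∈ rts (revswap w) j, t = r) ∨ (∃ r ∈ rts w j, t - shift w j = r)) := by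
        intro t
        set Mb : ℤ := 2 * (w.length : ℤ) + 1 with hMb
        set ν : Fin n → ℤ := fun k => if k = j then t else Mb with hν
        have hνj : ν j = t := by simp [hν]
        have habs : ∀ k : Fin n, -(w.length : ℤ) ≤ shift w k ∧ shift w k ≤ (w.length : ℤ) := by
          intro k
          have := abs_le.mp (abs_shift_le w k)
          exact this
        have hB : coeff w ν = 0 ↔ ∃ r ∈ rts w j, t = r := by
          refine coeff_zero_at w j t ν hνj ?_
          intro k hk
          have hνk : ν k = Mb := by simp [hν, hk]
          rw [hνk, abs_of_pos (by omega)]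
          omega
        have hA : coeff (revswap w) ν = 0 ↔ ∃ r ∈ rts (revswap w) j, t = r := by
          refine coeff_zero_at _ j t ν hνj ?_
          intro k hk
          have hνk : ν k = Mb := by simp [hν, hk]
          rw [length_revswap, hνk, abs_of_pos (by omega)]
          omega
        have hC : coeff (revswap w) (ν + shift w) = 0
            ↔ ∃ r ∈ rts (revswap w) j, t + shift w j = r := by
          refine coeff_zero_at _ j _ _ (by rw [Pi.add_apply, hνj]) ?_
          intro k hk
          have hνk : (ν + shift w) k = Mb + shift w k := by simp [hν, hk]
          have := habs k
          rw [length_revswap, hνk, abs_of_pos (by omega)]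
          omega
        have hDD : coeff w (ν - shift w) = 0 ↔ ∃ r ∈ rts w j, t - shift w j = r := by
          refine coeff_zero_at _ j _ _ (by rw [Pi.sub_apply, hνj]) ?_
          intro k hk
          have hνk : (ν - shift w) k = Mb - shift w k := by simp [hν, hk]
          have := habs k
          rw [hνk, abs_of_pos (by omega)]
          omega
        have hzero : (coeff w ν = 0 ∨ coeff (revswap w) (ν + shift w) = 0)
            ↔ (coeff (revswap w) ν = 0 ∨ coeff w (ν - shift w) = 0) := by
          rw [← mul_eq_zero, ← mul_eq_zero, heq ν]
        rw [hB, hC, hA, hDD] at hzero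
        exact hzero
      rcases lt_or_gt_of_ne hj with hneg | hpos
      · refine endgame (rts (revswap w) j) (rts w j) (-(shift w j)) (by omega) ?_ ?_
        · intro hnil
          have hlen := length_rts w j
          rw [hnil] at hlen
          simp only [List.length_nil] at hlen
          rw [shift] at hneg
          omega
        · intro t
          simpa [sub_neg_eq_add, ← sub_eq_add_neg] using (hiff t).symm
      · refine endgame (rts w j) (rts (revswap w) j) (shift w j) hpos ?_ ?_
        · intro hnil
          have hlen := length_rts (revswap w) j
          rw [hnil, count_revswap_inl] at hlen
          simp only [List.length_nil] at hlen
          rw [shift] at hpos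
          omega
        · exact hiff
    funext j
    have hj := hshift j
    rw [shift] at hj
    show w.count (Sum.inr j) = w.count (Sum.inl j)
    omega
  · intro h
    rw [dagger_word, word_revswap w h, sub_self]
    simp [comm]

/-- For a monomial `m` with multi-degree `(α, β)`, setting
`g₊(m) = i(m† + m)` and `g₋(m) = m† - m`, the elements `g₊(m)` and `g₋(m)`
commute if and only if `α = β`. -/
theorem statement12 {n : ℕ} (w : List (Fin n ⊕ Fin n)) :
    comm (Complex.I • (dagger (word w) + word w)) (dagger (word w) - word w) = 0 ↔
      mdegC w = mdegA w := by
  exact statement12' w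

end WeylPaper
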